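/- Let $B_1 \subset \tilde B$ be Banach spaces with a compact continuous linear embedding, let $T>0$, and let $\alpha \in (0,1)$ and $p > 1$ satisfy $\alpha p > 1$. Then every sequence $(g_n)$ of continuous functions $g_n : [0,T] \to B_1$ that is bounded in the $W^{\alpha,p}(0,T;B_1)$ norm (i.e. $\sup_n \int_0^T \|g_n(t)\|_{B_1}^p dt + \int_0^T\int_0^T \|g_n(t)-g_n(s)\|_{B_1}^p |t-s|^{-1-\alpha p} ds\,dt < \infty$) has a subsequence that converges uniformly on $[0,T]$ in the norm of $\tilde B$; i.e. $W^{\alpha,p}(0,T;B_1)$ is compactly embedded into $C([0,T];\tilde B)$. -/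

import Mathlib

/-!
By Jensen's inequality, a bound `M` on the Gagliardo double integral
`∫∫ ‖f t - f s‖^p / |t - s|^{1 + αp}` controls the difference of the averages of `f` over two
nested intervals of lengths `ℓ` and `ℓ / 2` by `(2M)^{1/p} ℓ^{α - 1/p}`. Telescoping along the
dyadic intervals `(t, t + h/2^k]` and `(s - h/2^k, s]`, whose averages tend to `f t` and `f s`
and which share their first term, gives `‖f t - f s‖ ≤ C |t - s|^{α - 1/p}` with `C` depending
only on `p`, `α` and `M`. Since `αp > 1`, the `gₙ` are therefore uniformly Hölder continuous, and
with the `L^p` bound also uniformly bounded; the compact embedding sends them into one compact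
subset of `B̃`, and Arzelà–Ascoli yields the uniformly convergent subsequence.
-/

open MeasureTheory ProbabilityTheory Filter Topology Set
open scoped ENNReal NNReal BoundedContinuousFunction

section Averages

variable {X E : Type*} [MeasurableSpace X] [NormedAddCommGroup E] [NormedSpace ℝ E]

theorem rpow_lintegral_le_lintegral_rpow {ν : Measure X} [IsProbabilityMeasure ν] {G : X → ℝ≥0∞}
    (hG : AEMeasurable G ν) {p : ℝ} (hp : 1 ≤ p) :
    (∫⁻ x, G x ∂ν) ^ p ≤ ∫⁻ x, G x ^ p ∂ν := by
  have h := eLpNorm'_le_eLpNorm'_mul_rpow_measure_univ one_pos hp hG.aestronglyMeasurable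
  simp only [eLpNorm'_eq_lintegral_enorm, enorm_eq_self, measure_univ, ENNReal.one_rpow, mul_one,
    ENNReal.rpow_one, div_one] at h
  calc (∫⁻ x, G x ∂ν) ^ p ≤ ((∫⁻ x, G x ^ p ∂ν) ^ (1 / p)) ^ p := by gcongr
    _ = ∫⁻ x, G x ^ p ∂ν := by
      rw [← ENNReal.rpow_mul, one_div_mul_cancel (by positivity), ENNReal.rpow_one]

theorem enorm_integral_sub_integral_le [CompleteSpace E] {ν₁ ν₂ : Measure X}
    [IsProbabilityMeasure ν₁] [IsProbabilityMeasure ν₂] {f : X → E}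
    (hf₁ : Integrable f ν₁) (hf₂ : Integrable f ν₂) :
    ‖∫ x, f x ∂ν₁ - ∫ y, f y ∂ν₂‖ₑ ≤ ∫⁻ x, ∫⁻ y, ‖f x - f y‖ₑ ∂ν₂ ∂ν₁ := by
  have hinner : ∀ x, f x - ∫ y, f y ∂ν₂ = ∫ y, (f x - f y) ∂ν₂ := fun x => by
    rw [integral_sub (integrable_const _) hf₂, integral_const, probReal_univ, one_smul]
  have houter : ∫ x, f x ∂ν₁ - ∫ y, f y ∂ν₂ = ∫ x, (f x - ∫ y, f y ∂ν₂) ∂ν₁ := by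
    rw [integral_sub hf₁ (integrable_const _), integral_const, probReal_univ, one_smul]
  rw [houter]
  simp only [hinner]
  exact (enorm_integral_le_lintegral_enorm _).trans
    (lintegral_mono fun x => enorm_integral_le_lintegral_enorm _)

theorem setAverage_eq_integral_cond (μ : Measure X) (s : Set X) (f : X → E) :
    ⨍ x in s, f x ∂μ = ∫ x, f x ∂μ[|s] := by
  rw [setAverage_eq']; rfl

theorem enorm_setAverage_sub_setAverage_rpow_le [CompleteSpace E] {μ : Measure X} {s t : Set X}
    (hs₀ : μ s ≠ 0) (hs : μ s ≠ ∞) (ht₀ : μ t ≠ 0) (ht : μ t ≠ ∞) {f : X → E}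
    (hfs : IntegrableOn f s μ) (hft : IntegrableOn f t μ) {p : ℝ} (hp : 1 ≤ p) :
    ‖⨍ x in s, f x ∂μ - ⨍ y in t, f y ∂μ‖ₑ ^ p
      ≤ (μ s)⁻¹ * ((μ t)⁻¹ * ∫⁻ x in s, ∫⁻ y in t, ‖f x - f y‖ₑ ^ p ∂μ ∂μ) := by
  have := cond_isProbabilityMeasure_of_finite hs₀ hs
  have := cond_isProbabilityMeasure_of_finite ht₀ ht
  have hf₁ : Integrable f μ[|s] := hfs.smul_measure (ENNReal.inv_ne_top.2 hs₀)
  have hf₂ : Integrable f μ[|t] := hft.smul_measure (ENNReal.inv_ne_top.2 ht₀)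
  have hH : AEMeasurable (fun z : X × X => ‖f z.1 - f z.2‖ₑ) (μ[|s].prod μ[|t]) :=
    (hf₁.1.comp_fst.sub hf₂.1.comp_snd).enorm
  rw [setAverage_eq_integral_cond, setAverage_eq_integral_cond]
  calc ‖∫ x, f x ∂μ[|s] - ∫ y, f y ∂μ[|t]‖ₑ ^ p
      ≤ (∫⁻ x, ∫⁻ y, ‖f x - f y‖ₑ ∂μ[|t] ∂μ[|s]) ^ p := by
        gcongr; exact enorm_integral_sub_integral_le hf₁ hf₂
    _ = (∫⁻ z, ‖f z.1 - f z.2‖ₑ ∂(μ[|s].prod μ[|t])) ^ p := by rw [lintegral_prod _ hH]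
    _ ≤ ∫⁻ z, ‖f z.1 - f z.2‖ₑ ^ p ∂(μ[|s].prod μ[|t]) :=
        rpow_lintegral_le_lintegral_rpow hH hp
    _ = _ := by
        rw [lintegral_prod _ (hH.pow_const p)]
        simp only [ProbabilityTheory.cond, lintegral_smul_measure, smul_eq_mul]
        rw [lintegral_const_mul' _ _ (ENNReal.inv_ne_top.2 ht₀)]

theorem norm_setAverage_sub_le_of_forall [CompleteSpace E] {μ : Measure X} {s : Set X}
    (hsm : MeasurableSet s) (hs₀ : μ s ≠ 0) (hs : μ s ≠ ∞) {f : X → E} (hf : IntegrableOn f s μ)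
    {c : E} {ε : ℝ} (hε : ∀ x ∈ s, ‖f x - c‖ ≤ ε) :
    ‖⨍ x in s, f x ∂μ - c‖ ≤ ε := by
  have := cond_isProbabilityMeasure_of_finite hs₀ hs
  have hf' : Integrable f μ[|s] := hf.smul_measure (ENNReal.inv_ne_top.2 hs₀)
  have hsub : ⨍ x in s, f x ∂μ - c = ∫ x, (f x - c) ∂μ[|s] := by
    rw [setAverage_eq_integral_cond, integral_sub hf' (integrable_const _), integral_const,
      probReal_univ, one_smul]
  simpa [hsub] using norm_integral_le_of_norm_le_const (μ := μ[|s]) (ae_cond_of_forall_mem hsm hε)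

theorem tendsto_setAverage_of_continuousWithinAt [PseudoMetricSpace X] [CompleteSpace E]
    {μ : Measure X} {f : X → E} {s : Set X} {x : X} (hf : ContinuousWithinAt f s x)
    {ι : Type*} {l : Filter ι} {S : ι → Set X} {r : ι → ℝ} (hr : Tendsto r l (𝓝 0))
    (hS : ∀ k, S k ⊆ s ∩ Metric.closedBall x (r k)) (hSm : ∀ k, MeasurableSet (S k))
    (hS₀ : ∀ k, μ (S k) ≠ 0) (hS' : ∀ k, μ (S k) ≠ ∞) (hfS : ∀ k, IntegrableOn f (S k) μ) :
    Tendsto (fun k => ⨍ y in S k, f y ∂μ) l (𝓝 (f x)) := by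
  refine Metric.tendsto_nhds.2 fun ε hε => ?_
  obtain ⟨δ, hδ, hfδ⟩ := Metric.continuousWithinAt_iff.1 hf (ε / 2) (half_pos hε)
  filter_upwards [hr.eventually (gt_mem_nhds hδ)] with k hk
  rw [dist_eq_norm]
  refine (norm_setAverage_sub_le_of_forall (hSm k) (hS₀ k) (hS' k) (hfS k) fun y hy => ?_).trans_lt
    (half_lt_self hε)
  have hy' := hS k hy
  simpa only [dist_eq_norm] using (hfδ hy'.1 ((Metric.mem_closedBall.1 hy'.2).trans_lt hk)).le

end Averages

section Gagliardo

variable {E : Type*} [NormedAddCommGroup E]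

/-- The `p`-th power of the Gagliardo seminorm `[f]_{W^{α,p}(s)}`. -/
noncomputable def gagliardoIntegral (f : ℝ → E) (p α : ℝ) (s : Set ℝ) : ℝ≥0∞ :=
  ∫⁻ x in s, ∫⁻ y in s, ‖f x - f y‖ₑ ^ p / ENNReal.ofReal (|x - y| ^ (1 + α * p))

theorem lintegral_enorm_sub_rpow_le_gagliardoIntegral {f : ℝ → E} {p α δ : ℝ} (hp : 0 < p)
    (hαp : 0 ≤ 1 + α * p) {s I J : Set ℝ} (hIs : I ⊆ s) (hJs : J ⊆ s) (hI : MeasurableSet I)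
    (hJ : MeasurableSet J) (hδ : ∀ x ∈ I, ∀ y ∈ J, |x - y| ≤ δ) :
    ∫⁻ x in I, ∫⁻ y in J, ‖f x - f y‖ₑ ^ p
      ≤ ENNReal.ofReal (δ ^ (1 + α * p)) * gagliardoIntegral f p α s := by
  set w : ℝ → ℝ → ℝ≥0∞ := fun x y => ENNReal.ofReal (|x - y| ^ (1 + α * p))
  have hpt : ∀ x ∈ I, ∀ y ∈ J,
      ‖f x - f y‖ₑ ^ p ≤ ENNReal.ofReal (δ ^ (1 + α * p)) * (‖f x - f y‖ₑ ^ p / w x y) := by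
    intro x hx y hy
    rcases eq_or_ne x y with rfl | hxy
    · simp [ENNReal.zero_rpow_of_pos hp]
    have hw : w x y ≠ 0 := by
      simpa [w] using Real.rpow_pos_of_pos (abs_pos.2 (sub_ne_zero.2 hxy)) _
    calc ‖f x - f y‖ₑ ^ p = w x y * (‖f x - f y‖ₑ ^ p / w x y) :=
          (ENNReal.mul_div_cancel hw ENNReal.ofReal_ne_top).symm
      _ ≤ _ := by
          gcongr
          exact ENNReal.ofReal_le_ofReal
            (Real.rpow_le_rpow (abs_nonneg _) (hδ x hx y hy) hαp)
  calc ∫⁻ x in I, ∫⁻ y in J, ‖f x - f y‖ₑ ^ p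
      ≤ ∫⁻ x in I, ∫⁻ y in J, ENNReal.ofReal (δ ^ (1 + α * p)) * (‖f x - f y‖ₑ ^ p / w x y) :=
        setLIntegral_mono' hI fun x hx => setLIntegral_mono' hJ (hpt x hx)
    _ = ENNReal.ofReal (δ ^ (1 + α * p)) * ∫⁻ x in I, ∫⁻ y in J, ‖f x - f y‖ₑ ^ p / w x y := by
        simp only [lintegral_const_mul' _ _ ENNReal.ofReal_ne_top]
    _ ≤ _ := by
        gcongr ENNReal.ofReal (δ ^ (1 + α * p)) * ?_
        exact (lintegral_mono_set hIs).trans' (lintegral_mono fun x => lintegral_mono_set hJs)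

variable [NormedSpace ℝ E] [CompleteSpace E] {f : ℝ → E} {a b p α : ℝ} {M : ℝ≥0∞}

theorem norm_setAverage_sub_setAverage_le_of_gagliardoIntegral_le (hf : ContinuousOn f (Icc a b))
    (hp : 1 ≤ p) (hα : 0 ≤ α) (hM : gagliardoIntegral f p α (Ioc a b) ≤ M) (hM' : M ≠ ⊤)
    {c c' ℓ : ℝ} (hℓ : 0 < ℓ) (hJI : Ioc c' (c' + ℓ / 2) ⊆ Ioc c (c + ℓ))
    (hI : Ioc c (c + ℓ) ⊆ Ioc a b) :
    ‖(⨍ x in Ioc c (c + ℓ), f x) - ⨍ x in Ioc c' (c' + ℓ / 2), f x‖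
      ≤ (2 * M.toReal) ^ (1 / p) * ℓ ^ (α - 1 / p) := by
  have hp0 : 0 < p := zero_lt_one.trans_le hp
  have hint : IntegrableOn f (Ioc a b) := (hf.integrableOn_Icc).mono_set Ioc_subset_Icc_self
  have hdist : ∀ x ∈ Ioc c (c + ℓ), ∀ y ∈ Ioc c' (c' + ℓ / 2), |x - y| ≤ ℓ := by
    intro x hx y hy
    have := hJI hy
    rw [abs_le]; constructor <;> linarith [hx.1, hx.2, this.1, this.2]
  have key := enorm_setAverage_sub_setAverage_rpow_le (μ := volume) (f := f)
    (s := Ioc c (c + ℓ)) (t := Ioc c' (c' + ℓ / 2)) (by simp [hℓ]) (by simp) (by simp [hℓ])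
    (by simp) (hint.mono_set hI) (hint.mono_set (hJI.trans hI)) hp
  have hrect := lintegral_enorm_sub_rpow_le_gagliardoIntegral (f := f) (α := α) hp0 (by positivity)
    hI (hJI.trans hI) measurableSet_Ioc measurableSet_Ioc hdist
  have hpow : ℓ⁻¹ * ((ℓ / 2)⁻¹ * (ℓ ^ (1 + α * p) * M.toReal))
      = ((2 * M.toReal) ^ (1 / p) * ℓ ^ (α - 1 / p)) ^ p := by
    rw [Real.mul_rpow (by positivity) (by positivity), ← Real.rpow_mul (by positivity),
      ← Real.rpow_mul hℓ.le, one_div_mul_cancel hp0.ne', Real.rpow_one,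
      show 1 + α * p = (α - 1 / p) * p + 2 by field_simp; ring, Real.rpow_add hℓ, Real.rpow_two]
    field_simp
  rw [← Real.rpow_le_rpow_iff (norm_nonneg _) (by positivity) hp0,
    ← ENNReal.ofReal_le_ofReal_iff (by positivity), ← ENNReal.ofReal_rpow_of_nonneg
      (norm_nonneg _) hp0.le, ofReal_norm, ← hpow, ENNReal.ofReal_mul (by positivity),
    ENNReal.ofReal_mul (by positivity), ENNReal.ofReal_mul (by positivity),
    ENNReal.ofReal_toReal hM', ENNReal.ofReal_inv_of_pos hℓ,
    ENNReal.ofReal_inv_of_pos (half_pos hℓ)]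
  refine key.trans ?_
  simp only [Real.volume_Ioc, add_sub_cancel_left]
  gcongr
  exact hrect.trans (by gcongr)

theorem norm_setAverage_sub_le_of_nested (hf : ContinuousOn f (Icc a b)) (hp : 1 ≤ p)
    (hαp : 1 < α * p) (hM : gagliardoIntegral f p α (Ioc a b) ≤ M) (hM' : M ≠ ⊤) {x : ℕ → ℝ}
    {h t : ℝ} (hh : 0 < h)
    (hnest : ∀ k, Ioc (x (k + 1)) (x (k + 1) + h / 2 ^ (k + 1)) ⊆ Ioc (x k) (x k + h / 2 ^ k))
    (hsub : Ioc (x 0) (x 0 + h) ⊆ Ioc a b) (ht : ∀ k, t ∈ Icc (x k) (x k + h / 2 ^ k)) :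
    ‖(⨍ u in Ioc (x 0) (x 0 + h), f u) - f t‖
      ≤ (2 * M.toReal) ^ (1 / p) * h ^ (α - 1 / p) / (1 - 2 ^ (-(α - 1 / p))) := by
  have hp0 : 0 < p := zero_lt_one.trans_le hp
  have hα : 0 ≤ α := (pos_of_mul_pos_left (zero_lt_one.trans hαp) hp0.le).le
  have hβ : 0 < α - 1 / p := by rw [sub_pos, div_lt_iff₀ hp0]; linarith
  set ℓ : ℕ → ℝ := fun k => h / 2 ^ k with hℓdef
  have hℓ : ∀ k, 0 < ℓ k := fun k => by positivity
  have hhalf : ∀ k, ℓ (k + 1) = ℓ k / 2 := fun k => by simp only [hℓdef, pow_succ]; ring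
  have hℓ0 : ℓ 0 = h := by simp [hℓdef]
  have hsubk : ∀ k, Ioc (x k) (x k + ℓ k) ⊆ Ioc a b := by
    intro k
    induction k with
    | zero => rwa [hℓ0]
    | succ k ih => exact (hnest k).trans ih
  have hstep : ∀ k, dist (⨍ u in Ioc (x k) (x k + ℓ k), f u)
      (⨍ u in Ioc (x (k + 1)) (x (k + 1) + ℓ (k + 1)), f u)
      ≤ (2 * M.toReal) ^ (1 / p) * h ^ (α - 1 / p) * (2 ^ (-(α - 1 / p))) ^ k := by
    intro k
    rw [dist_eq_norm, hhalf]
    refine (norm_setAverage_sub_setAverage_le_of_gagliardoIntegral_le hf hp hα hM hM' (hℓ k)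
      (by rw [← hhalf]; exact hnest k) (hsubk k)).trans_eq ?_
    rw [mul_assoc, hℓdef, Real.div_rpow hh.le (by positivity), ← Real.rpow_natCast,
      ← Real.rpow_mul (by norm_num), ← Real.rpow_natCast, ← Real.rpow_mul (by norm_num),
      neg_mul, Real.rpow_neg (by norm_num), mul_comm (k : ℝ)]
    ring
  have hint : IntegrableOn f (Ioc a b) := hf.integrableOn_Icc.mono_set Ioc_subset_Icc_self
  have htab : t ∈ Icc a b := by
    obtain ⟨hb, ha⟩ := (Ioc_subset_Ioc_iff (lt_add_of_pos_right _ hh)).1 hsub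
    have := ht 0
    rw [pow_zero, div_one] at this
    exact ⟨ha.trans this.1, this.2.trans hb⟩
  have hlim : Tendsto (fun k => ⨍ u in Ioc (x k) (x k + ℓ k), f u) atTop (𝓝 (f t)) := by
    refine tendsto_setAverage_of_continuousWithinAt (hf t htab) (r := ℓ)
      ((tendsto_const_nhds (x := h)).div_atTop (tendsto_pow_atTop_atTop_of_one_lt one_lt_two))
      (fun k u hu => ⟨Ioc_subset_Icc_self (hsubk k hu), ?_⟩) (fun _ => measurableSet_Ioc)
      (fun k => by simp [hℓ k]) (fun _ => by simp) (fun k => hint.mono_set (hsubk k))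
    rw [Metric.mem_closedBall, Real.dist_eq, abs_le]
    constructor <;> linarith [hu.1, hu.2, (ht k).1, (ht k).2]
  have := dist_le_of_le_geometric_of_tendsto₀ _ _
    (Real.rpow_lt_one_of_one_lt_of_neg one_lt_two (neg_lt_zero.2 hβ)) hstep hlim
  rwa [dist_eq_norm, hℓ0] at this

theorem norm_sub_le_of_gagliardoIntegral_le (hf : ContinuousOn f (Icc a b)) (hp : 1 ≤ p)
    (hαp : 1 < α * p) (hM : gagliardoIntegral f p α (Ioc a b) ≤ M) (hM' : M ≠ ⊤) {t s : ℝ}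
    (ht : t ∈ Icc a b) (hs : s ∈ Icc a b) :
    ‖f t - f s‖
      ≤ 2 * (2 * M.toReal) ^ (1 / p) / (1 - 2 ^ (-(α - 1 / p))) * |t - s| ^ (α - 1 / p) := by
  wlog hts : t ≤ s generalizing t s
  · rw [norm_sub_rev, abs_sub_comm]
    exact this hs ht (le_of_not_ge hts)
  have hβ : 0 < α - 1 / p := by
    rw [sub_pos, div_lt_iff₀ (zero_lt_one.trans_le hp)]; linarith
  rcases hts.eq_or_lt with rfl | hlt
  · simp only [sub_self, norm_zero, abs_zero, Real.zero_rpow hβ.ne', mul_zero, le_refl]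
  set h := s - t with hhdef
  have hh : 0 < h := sub_pos.2 hlt
  have hA := norm_setAverage_sub_le_of_nested hf hp hαp hM hM' (x := fun _ => t) (t := t) hh
    (fun k => Ioc_subset_Ioc_right (by gcongr <;> norm_num))
    (by rw [hhdef, add_sub_cancel]; exact Ioc_subset_Ioc ht.1 hs.2)
    (fun k => ⟨le_rfl, le_add_of_nonneg_right (by positivity)⟩)
  have hB := norm_setAverage_sub_le_of_nested hf hp hαp hM hM' (x := fun k => s - h / 2 ^ k)
    (t := s) hh
    (fun k => by simp only [sub_add_cancel]; exact Ioc_subset_Ioc_left (by gcongr <;> norm_num))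
    (by rw [pow_zero, div_one, sub_add_cancel, hhdef, sub_sub_cancel]
        exact Ioc_subset_Ioc ht.1 hs.2)
    (fun k => ⟨sub_le_self _ (by positivity), (sub_add_cancel _ _).ge⟩)
  simp only [pow_zero, div_one, hhdef, add_sub_cancel, sub_sub_cancel] at hA hB
  rw [abs_sub_comm, abs_of_pos hh]
  calc ‖f t - f s‖ = ‖((⨍ u in Ioc t s, f u) - f s) - ((⨍ u in Ioc t s, f u) - f t)‖ := by
        congr 1; abel
    _ ≤ ‖(⨍ u in Ioc t s, f u) - f s‖ + ‖(⨍ u in Ioc t s, f u) - f t‖ := norm_sub_le _ _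
    _ ≤ _ := add_le_add hB hA
    _ = _ := by ring

end Gagliardo

section Holder

variable {X Y : Type*} [PseudoMetricSpace X]

theorem HolderOnWith.of_dist_le [PseudoMetricSpace Y] {f : X → Y} {s : Set X} {C : ℝ} {r : ℝ≥0}
    (h : ∀ x ∈ s, ∀ y ∈ s, dist (f x) (f y) ≤ C * dist x y ^ (r : ℝ)) :
    HolderOnWith C.toNNReal r f s := by
  intro x hx y hy
  rw [edist_dist, edist_dist, ENNReal.ofReal_rpow_of_nonneg dist_nonneg r.coe_nonneg]
  exact (ENNReal.ofReal_le_ofReal (h x hx y hy)).trans_eq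
    (ENNReal.ofReal_mul' (Real.rpow_nonneg dist_nonneg _))

theorem HolderOnWith.norm_le_of_lintegral_rpow_le {E : Type*} [NormedAddCommGroup E] {f : ℝ → E}
    {a b p : ℝ} {C r : ℝ≥0} {M : ℝ≥0∞} (hf : HolderOnWith C r f (Icc a b)) (hr : 0 < r)
    (hab : a < b) (hp : 0 < p) (hM : ∫⁻ t in Ioc a b, ‖f t‖ₑ ^ p ≤ M) (hM' : M ≠ ⊤) {t : ℝ}
    (ht : t ∈ Icc a b) :
    ‖f t‖ ≤ ((M / ENNReal.ofReal (b - a)) ^ (1 / p)).toReal + C * (b - a) ^ (r : ℝ) := by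
  have hvol : volume (Ioc a b) = ENNReal.ofReal (b - a) := Real.volume_Ioc
  have hmeas : AEMeasurable (fun t => ‖f t‖ₑ ^ p) (volume.restrict (Ioc a b)) :=
    (((hf.continuousOn hr).mono Ioc_subset_Icc_self).aestronglyMeasurable
      measurableSet_Ioc).enorm.pow_const p
  obtain ⟨s, hs, hfs⟩ := exists_notMem_null_le_laverage (N := (Ioc a b)ᶜ)
    (by simp [hab]) hmeas (by simp [Measure.restrict_apply measurableSet_Ioc.compl])
  rw [notMem_compl_iff] at hs
  have hfs' : ‖f s‖ₑ ^ p ≤ M / ENNReal.ofReal (b - a) :=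
    hfs.trans (by rw [setLAverage_eq, hvol]; gcongr)
  have hs' : ‖f s‖ ≤ ((M / ENNReal.ofReal (b - a)) ^ (1 / p)).toReal := by
    rw [← toReal_enorm]
    refine ENNReal.toReal_mono (ENNReal.rpow_ne_top_of_nonneg (by positivity)
      (ENNReal.div_ne_top hM' (by simp [hab]))) ?_
    calc ‖f s‖ₑ = (‖f s‖ₑ ^ p) ^ (1 / p) := by
          rw [← ENNReal.rpow_mul, mul_one_div_cancel hp.ne', ENNReal.rpow_one]
      _ ≤ _ := by gcongr
  have hts : dist t s ≤ b - a := by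
    rw [Real.dist_eq, abs_le]; constructor <;> linarith [ht.1, ht.2, hs.1, hs.2]
  calc ‖f t‖ ≤ ‖f s‖ + ‖f t - f s‖ := norm_le_insert' _ _
    _ ≤ _ := by
        rw [← dist_eq_norm]
        exact add_le_add hs' (hf.dist_le_of_le ht (Ioc_subset_Icc_self hs) hts)

theorem exists_subseq_tendstoUniformlyOn_of_holderOnWith [MetricSpace Y] {s : Set X}
    (hs : IsCompact s) {K : Set Y} (hK : IsCompact K) {C r : ℝ≥0} (hr : 0 < r) {F : ℕ → X → Y}
    (hF : ∀ n, HolderOnWith C r (F n) s) (hFK : ∀ n, ∀ x ∈ s, F n x ∈ K) :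
    ∃ φ : ℕ → ℕ, StrictMono φ ∧ ∃ G : X → Y,
      ContinuousOn G s ∧ TendstoUniformlyOn (fun k => F (φ k)) G atTop s := by
  classical
  have := isCompact_iff_compactSpace.1 hs
  let B : ℕ → s →ᵇ Y := fun n =>
    .mkOfCompact ⟨s.domRestrict (F n), ((hF n).continuousOn hr).domRestrict⟩
  have hmod : Tendsto (fun d : ℝ => C * d ^ (r : ℝ)) (𝓝 0) (𝓝 0) := by
    have hc : Continuous fun d : ℝ => (C : ℝ) * d ^ (r : ℝ) :=
      continuous_const.mul (Real.continuous_rpow_const r.coe_nonneg)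
    simpa [Real.zero_rpow (NNReal.coe_ne_zero.2 hr.ne')] using hc.tendsto 0
  have hequi : Equicontinuous ((↑) : range B → s → Y) :=
    Metric.equicontinuous_of_continuity_modulus _ hmod _ fun x y ⟨_, n, hn⟩ => by
      subst hn; exact (hF n).dist_le x.2 y.2
  obtain ⟨G, -, φ, hφ, hlim⟩ :=
    (BoundedContinuousFunction.arzela_ascoli K hK (range B) (fun _ x ⟨n, hn⟩ => hn ▸ hFK n x x.2)
      hequi).tendsto_subseq fun n => subset_closure ⟨n, rfl⟩
  let G' : X → Y := fun x => if hx : x ∈ s then G ⟨x, hx⟩ else F 0 x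
  have hunif : TendstoUniformlyOn (fun k => F (φ k)) G' atTop s := by
    have hG : G' ∘ (↑) = G := funext fun x => dif_pos x.2
    rw [tendstoUniformlyOn_iff_tendstoUniformly_comp_coe, hG]
    exact BoundedContinuousFunction.tendsto_iff_tendstoUniformly.1 hlim
  exact ⟨φ, hφ, G', hunif.continuousOn (Frequently.of_forall fun k => (hF _).continuousOn hr),
    hunif⟩

end Holder

theorem stmt_1_general
    {B1 Bt : Type*}
    [NormedAddCommGroup B1] [NormedSpace ℝ B1] [CompleteSpace B1]
    [NormedAddCommGroup Bt] [NormedSpace ℝ Bt]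
    (i : B1 →L[ℝ] Bt)
    (hcompact : ∀ s : Set B1, Bornology.IsBounded s → IsCompact (closure (⇑i '' s)))
    (T : ℝ) (hT : 0 < T) (p α : ℝ) (hp : 1 < p)
    (hαp : 1 < α * p)
    (g : ℕ → ℝ → B1)
    (hcont : ∀ n, ContinuousOn (g n) (Set.Icc 0 T))
    (M : ℝ≥0∞) (hM : M < ⊤)
    (hbound : ∀ n,
      (∫⁻ t in Set.Ioc 0 T, (‖g n t‖₊ : ℝ≥0∞) ^ p)
        + (∫⁻ t in Set.Ioc 0 T, ∫⁻ s in Set.Ioc 0 T,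
            (‖g n t - g n s‖₊ : ℝ≥0∞) ^ p
              / ENNReal.ofReal (|t - s| ^ (1 + α * p))) ≤ M) :
    ∃ φ : ℕ → ℕ, StrictMono φ ∧ ∃ glim : ℝ → Bt,
      ContinuousOn glim (Set.Icc 0 T) ∧
      TendstoUniformlyOn (fun k t => i (g (φ k) t)) glim atTop (Set.Icc 0 T) := by
  have hp0 : 0 < p := zero_lt_one.trans hp
  have hβ : 0 < α - 1 / p := by rw [sub_pos, div_lt_iff₀ hp0]; linarith
  set C : ℝ := 2 * (2 * M.toReal) ^ (1 / p) / (1 - 2 ^ (-(α - 1 / p)))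
  have hhol : ∀ n, HolderOnWith C.toNNReal (α - 1 / p).toNNReal (g n) (Icc 0 T) := fun n =>
    HolderOnWith.of_dist_le fun t ht s hs => by
      rw [dist_eq_norm, Real.dist_eq, Real.coe_toNNReal _ hβ.le]
      exact norm_sub_le_of_gagliardoIntegral_le (hcont n) hp.le hαp
        (le_add_self.trans (hbound n)) hM.ne ht hs
  set R : ℝ :=
    ((M / ENNReal.ofReal T) ^ (1 / p)).toReal + C.toNNReal * T ^ ((α - 1 / p).toNNReal : ℝ)
  have hbdd : ∀ n, ∀ t ∈ Icc 0 T, g n t ∈ Metric.closedBall 0 R := by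
    intro n t ht
    rw [mem_closedBall_zero_iff]
    simpa only [sub_zero] using (hhol n).norm_le_of_lintegral_rpow_le
      (Real.toNNReal_pos.2 hβ) hT hp0 (le_self_add.trans (hbound n)) hM.ne ht
  exact exists_subseq_tendstoUniformlyOn_of_holderOnWith isCompact_Icc
    (hcompact _ Metric.isBounded_closedBall) (by simpa using hβ)
    (F := fun n => i ∘ g n) (fun n => (holderWith_one.2 i.lipschitz).comp_holderOnWith (hhol n))
    (fun n t ht => subset_closure (mem_image_of_mem i (hbdd n t ht)))

/-- Compact embedding `W^{α,p}(0,T;B₁) ⋐ C([0,T]; B̃)` for `αp > 1`: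
if `B₁ ⊂ B̃` are Banach spaces with a compact continuous injective embedding,
`α ∈ (0,1)`, `p > 1` and `αp > 1`, then any sequence of continuous functions
`gₙ : [0,T] → B₁` bounded in the `W^{α,p}(0,T;B₁)` norm has a subsequence that
converges uniformly on `[0,T]` in the norm of `B̃`. -/
theorem stmt_1
    {B1 Bt : Type*}
    [NormedAddCommGroup B1] [NormedSpace ℝ B1] [CompleteSpace B1]
    [NormedAddCommGroup Bt] [NormedSpace ℝ Bt] [CompleteSpace Bt]
    (i : B1 →L[ℝ] Bt) (hi : Function.Injective i)
    (hcompact : ∀ s : Set B1, Bornology.IsBounded s → IsCompact (closure (⇑i '' s)))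
    (T : ℝ) (hT : 0 < T) (p α : ℝ) (hp : 1 < p) (hα : α ∈ Set.Ioo (0:ℝ) 1)
    (hαp : 1 < α * p)
    (g : ℕ → ℝ → B1)
    (hcont : ∀ n, ContinuousOn (g n) (Set.Icc 0 T))
    (M : ℝ≥0∞) (hM : M < ⊤)
    (hbound : ∀ n,
      (∫⁻ t in Set.Ioc 0 T, (‖g n t‖₊ : ℝ≥0∞) ^ p)
        + (∫⁻ t in Set.Ioc 0 T, ∫⁻ s in Set.Ioc 0 T,
            (‖g n t - g n s‖₊ : ℝ≥0∞) ^ p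
              / ENNReal.ofReal (|t - s| ^ (1 + α * p))) ≤ M) :
    ∃ φ : ℕ → ℕ, StrictMono φ ∧ ∃ glim : ℝ → Bt,
      ContinuousOn glim (Set.Icc 0 T) ∧
      TendstoUniformlyOn (fun k t => i (g (φ k) t)) glim atTop (Set.Icc 0 T) :=
  stmt_1_general i hcompact T hT p α hp hαp g hcont M hM hbound
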